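/- arXiv:1302.5010 — 3 statements merged into one kernel-verified Lean document; each statement's English description precedes it below -/
import Mathlib

section
/- One proximal-gradient step decreases the ℓ₁-regularized least-squares objective by at least (1/2L)‖G(x)‖², i.e., f(x) − f(x⁺) ≥ (1/2L)‖G(x)‖² where x⁺ = S_{L,λ}(x − g/L), g = Aᵀ(Ax − b), and G(x) = L(x − x⁺), provided ‖A‖²_{op} ≤ L. -/
/-! Write `x⁺ = x + d`. Soft-thresholding is the proximal map of `(λ/L)‖·‖₁`, so the subgradient
inequality at `x⁺`, tested at `x`, gives `λ‖x‖₁ - λ‖x⁺‖₁ ≥ L‖d‖² + ⟪g, d⟫`. The smoothness bound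
`‖Ad‖² ≤ L‖d‖²` gives `½‖b - Ax⁺‖² ≤ ½‖b - Ax‖² + ⟪g, d⟫ + (L/2)‖d‖²`. Subtracting, the decrease
is at least `(L/2)‖d‖² = ‖G‖²/(2L)`. -/

open Finset

noncomputable def softThresh {m : ℕ} (L lam : ℝ) (o : Fin m → ℝ) : Fin m → ℝ :=
  fun i => Real.sign (o i) * max (|o i| - lam / L) 0

noncomputable def softThreshold (c o : ℝ) : ℝ :=
  Real.sign o * max (|o| - c) 0

lemma softThresh_apply {m : ℕ} (L lam : ℝ) (o : Fin m → ℝ) (j : Fin m) :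
    softThresh L lam o j = softThreshold (lam / L) (o j) :=
  rfl

lemma softThreshold_subgradient {c : ℝ} (hc : 0 ≤ c) (o t : ℝ) :
    c * |softThreshold c o| + (o - softThreshold c o) * (t - softThreshold c o) ≤ c * |t| := by
  unfold softThreshold
  rcases le_or_gt |o| c with hsmall | hlarge
  · rw [max_eq_right (by linarith), mul_zero, abs_zero, mul_zero, zero_add, sub_zero, sub_zero]
    calc o * t ≤ |o| * |t| := by rw [← abs_mul]; exact le_abs_self _
      _ ≤ c * |t| := mul_le_mul_of_nonneg_right hsmall (abs_nonneg t)
  · rw [max_eq_left (by linarith)]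
    rcases lt_or_gt_of_ne (show o ≠ 0 by rintro rfl; rw [abs_zero] at hlarge; linarith) with hneg | hpos
    · rw [Real.sign_of_neg hneg, abs_of_neg hneg] at *
      rw [abs_of_neg (by linarith)]
      nlinarith [neg_abs_le t]
    · rw [Real.sign_of_pos hpos, abs_of_pos hpos] at *
      rw [abs_of_pos (by linarith)]
      nlinarith [le_abs_self t]

lemma lam_mul_sum_abs_softThresh_add_le {m : ℕ} {L lam : ℝ} (hL : 0 < L) (hlam : 0 ≤ lam)
    (o t : Fin m → ℝ) :
    lam * ∑ j, |softThresh L lam o j|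
        + L * ∑ j, (o j - softThresh L lam o j) * (t j - softThresh L lam o j)
      ≤ lam * ∑ j, |t j| := by
  have hsum := sum_le_sum fun j (_ : j ∈ univ) =>
    softThreshold_subgradient (div_nonneg hlam hL.le) (o j) (t j)
  simp only [sum_add_distrib, ← mul_sum, ← softThresh_apply] at hsum
  have hlam' : L * (lam / L) = lam := mul_div_cancel₀ lam hL.ne'
  calc _ = L * ((lam / L) * ∑ j, |softThresh L lam o j|
              + ∑ j, (o j - softThresh L lam o j) * (t j - softThresh L lam o j)) := by
          rw [mul_add, ← mul_assoc, hlam']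
    _ ≤ L * ((lam / L) * ∑ j, |t j|) := mul_le_mul_of_nonneg_left hsum hL.le
    _ = lam * ∑ j, |t j| := by rw [← mul_assoc, hlam']

section LeastSquares

open Matrix

variable {ι κ : Type*} [Fintype ι] [Fintype κ]

lemma sum_sq_sub_mulVec_add (A : Matrix ι κ ℝ) (b : ι → ℝ) (x d : κ → ℝ) :
    ∑ i, (b i - (A *ᵥ (x + d)) i) ^ 2
      = ∑ i, (b i - (A *ᵥ x) i) ^ 2 + 2 * ((Aᵀ *ᵥ (A *ᵥ x - b)) ⬝ᵥ d)
        + ∑ i, (A *ᵥ d) i ^ 2 := by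
  have hadj : (Aᵀ *ᵥ (A *ᵥ x - b)) ⬝ᵥ d = ∑ i, ((A *ᵥ x) i - b i) * (A *ᵥ d) i := by
    rw [Matrix.mulVec_transpose, ← Matrix.dotProduct_mulVec]; rfl
  rw [hadj, mul_sum, ← sum_add_distrib, ← sum_add_distrib]
  refine sum_congr rfl fun i _ => ?_
  rw [Matrix.mulVec_add, Pi.add_apply]
  ring

lemma half_sum_sq_sub_mulVec_add_le (A : Matrix ι κ ℝ) (b : ι → ℝ) {L : ℝ}
    (hsmooth : ∀ v : κ → ℝ, ∑ i, (A *ᵥ v) i ^ 2 ≤ L * ∑ j, v j ^ 2) (x d : κ → ℝ) :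
    (1/2) * ∑ i, (b i - (A *ᵥ (x + d)) i) ^ 2
      ≤ (1/2) * ∑ i, (b i - (A *ᵥ x) i) ^ 2 + (Aᵀ *ᵥ (A *ᵥ x - b)) ⬝ᵥ d
        + L / 2 * ∑ j, d j ^ 2 := by
  rw [sum_sq_sub_mulVec_add]
  linarith [hsmooth d]

end LeastSquares

theorem prox_step_descent {n m : ℕ}
    (A : Matrix (Fin n) (Fin m) ℝ) (b : Fin n → ℝ) (lam L : ℝ)
    (hlam : 0 ≤ lam) (hL : 0 < L)
    (hsmooth : ∀ v : Fin m → ℝ, (∑ i, (A.mulVec v i)^2) ≤ L * ∑ j, (v j)^2)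
    (x : Fin m → ℝ)
    (g : Fin m → ℝ) (hg : g = A.transpose.mulVec (A.mulVec x - b))
    (xplus : Fin m → ℝ) (hxplus : xplus = softThresh L lam (fun j => x j - g j / L))
    (G : Fin m → ℝ) (hG : G = fun j => L * (x j - xplus j)) :
    (lam * (∑ j, |x j|) + (1/2) * (∑ i, (b i - A.mulVec x i)^2))
      - (lam * (∑ j, |xplus j|) + (1/2) * (∑ i, (b i - A.mulVec xplus i)^2))
      ≥ (1/(2*L)) * ∑ j, (G j)^2 := by
  set d := xplus - x with hd
  have hquad := half_sum_sq_sub_mulVec_add_le A b hsmooth x d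
  rw [add_sub_cancel, ← hg] at hquad
  have hprox := lam_mul_sum_abs_softThresh_add_le hL hlam (fun j => x j - g j / L) x
  rw [← hxplus] at hprox
  have hinner : L * ∑ j, (x j - g j / L - xplus j) * (x j - xplus j)
      = L * ∑ j, d j ^ 2 + g ⬝ᵥ d := by
    simp only [dotProduct, hd, Pi.sub_apply, mul_sum, ← sum_add_distrib]
    refine sum_congr rfl fun j _ => ?_
    field_simp
    ring
  have hGsq : (1/(2*L)) * ∑ j, G j ^ 2 = L / 2 * ∑ j, d j ^ 2 := by
    simp only [hG, hd, Pi.sub_apply, mul_sum]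
    refine sum_congr rfl fun j _ => ?_
    field_simp
    ring
  rw [hGsq]
  linarith
end

section
/- Finite termination of the atom-inclusion process: since I_t ⊆ {1,…,m} strictly increases by at least one index whenever a violated constraint exists (some |g_i| > λ with i ∉ I_t), and I_t ⊆ {1,…,m} is finite, after at most m iterations no violated constraint exists, i.e., ‖Aᵀ(Ax^t − b)‖_∞ ≤ λ at coordinates outside I_t; combined with the optimality conditions on I_t this means x^t is a global minimizer of λ‖x‖₁ + (1/2)‖b − Ax‖². -/
open Finset Matrix

/-!
Termination is forced by cardinality: a strictly increasing chain of subsets of a set with `m`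
elements has at most `m + 1` terms, so some `t ≤ m` has no violated index. For optimality, write
`g = Aᵀ(Ax - b)`; the objective then splits as
`f (x + d) = f x + ∑ⱼ (ψⱼ (xⱼ + dⱼ) - ψⱼ xⱼ) + ½‖A d‖²` with `ψⱼ s = λ|s| + gⱼ s` (`lassoCoordModel`),
so `x` is a global minimizer as soon as every convex function `ψⱼ` is minimal at `xⱼ`. Off `I` this
is `|gⱼ| ≤ λ` at `xⱼ = 0`; on `I`, minimality of `f` along the `j`-th axis gives
`ψⱼ xⱼ ≤ ψⱼ (xⱼ + s) + c s²`, and for a convex function the quadratic error can be removed.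
-/

theorem exists_le_card_of_not_imp_ssubset {α : Type*} [Fintype α] (I : ℕ → Finset α)
    (P : ℕ → Prop) (hgrow : ∀ t, ¬ P t → I t ⊂ I (t + 1)) :
    ∃ t ≤ Fintype.card α, P t := by
  by_contra! hnot
  have hcard : ∀ t ≤ Fintype.card α + 1, t ≤ #(I t) := by
    intro t
    induction t with
    | zero => simp
    | succ t ih =>
      intro ht
      have hlt := card_lt_card (hgrow t (hnot t (by omega)))
      have hle := ih (by omega)
      omega
  have := (hcard _ le_rfl).trans (card_le_univ _)
  omega

open Filter Set in
theorem ConvexOn.le_add_of_le_add_mul_sq {ψ : ℝ → ℝ} (hψ : ConvexOn ℝ univ ψ) {v c : ℝ}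
    (h : ∀ s, ψ v ≤ ψ (v + s) + c * s ^ 2) (s : ℝ) : ψ v ≤ ψ (v + s) := by
  have hsmall : ∀ t ∈ Ioo (0 : ℝ) 1, ψ v ≤ ψ (v + s) + c * s ^ 2 * t := by
    rintro t ⟨ht0, ht1⟩
    have hconv : ψ (v + t * s) ≤ (1 - t) * ψ v + t * ψ (v + s) := by
      have := hψ.2 (mem_univ v) (mem_univ (v + s)) (by linarith : 0 ≤ 1 - t) ht0.le (by ring)
      simpa only [smul_eq_mul, show (1 - t) * v + t * (v + s) = v + t * s by ring] using this
    have hquad := h (t * s)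
    have : t * ψ v ≤ t * (ψ (v + s) + c * s ^ 2 * t) := by linarith
    exact le_of_mul_le_mul_left this ht0
  have hlim : Tendsto (fun t => ψ (v + s) + c * s ^ 2 * t) (nhdsWithin 0 (Ioi 0))
      (nhds (ψ (v + s))) :=
    tendsto_nhdsWithin_of_tendsto_nhds
      ((continuous_const.add (continuous_const.mul continuous_id)).tendsto' 0 _ (by simp))
  exact ge_of_tendsto hlim (eventually_of_mem (Ioo_mem_nhdsGT one_pos) hsmall)

section Lasso

variable {ι κ : Type*} [Fintype ι] [Fintype κ]

noncomputable def lassoObjective (A : Matrix ι κ ℝ) (b : ι → ℝ) (lam : ℝ) (x : κ → ℝ) : ℝ :=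
  lam * (∑ j, |x j|) + (1 / 2) * ∑ i, (b i - (A *ᵥ x) i) ^ 2

noncomputable def lassoCoordModel (A : Matrix ι κ ℝ) (b : ι → ℝ) (lam : ℝ) (x : κ → ℝ) (j : κ)
    (s : ℝ) : ℝ :=
  lam * |s| + (Aᵀ *ᵥ (A *ᵥ x - b)) j * s

theorem convexOn_lassoCoordModel (A : Matrix ι κ ℝ) (b : ι → ℝ) {lam : ℝ} (hlam : 0 ≤ lam)
    (x : κ → ℝ) (j : κ) : ConvexOn ℝ Set.univ (lassoCoordModel A b lam x j) :=
  ((convexOn_norm convex_univ).smul hlam).add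
    ((LinearMap.mul ℝ ℝ ((Aᵀ *ᵥ (A *ᵥ x - b)) j)).convexOn convex_univ)

theorem lassoObjective_add (A : Matrix ι κ ℝ) (b : ι → ℝ) (lam : ℝ) (x d : κ → ℝ) :
    lassoObjective A b lam (x + d) = lassoObjective A b lam x
      + ∑ j, (lassoCoordModel A b lam x j (x j + d j) - lassoCoordModel A b lam x j (x j))
      + (1 / 2) * ∑ i, (A *ᵥ d) i ^ 2 := by
  set g := Aᵀ *ᵥ (A *ᵥ x - b)
  have hcross : ∑ i, (A *ᵥ x - b) i * (A *ᵥ d) i = ∑ j, g j * d j := by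
    simpa only [g, mulVec_transpose, dotProduct] using dotProduct_mulVec (A *ᵥ x - b) A d
  have hsq : ∑ i, (b i - (A *ᵥ (x + d)) i) ^ 2 = ∑ i, (b i - (A *ᵥ x) i) ^ 2
      + 2 * ∑ i, (A *ᵥ x - b) i * (A *ᵥ d) i + ∑ i, (A *ᵥ d) i ^ 2 := by
    rw [mul_sum, ← sum_add_distrib, ← sum_add_distrib]
    refine sum_congr rfl fun i _ => ?_
    simp only [mulVec_add, Pi.add_apply, Pi.sub_apply]
    ring
  have hlin : ∑ j, (lassoCoordModel A b lam x j (x j + d j) - lassoCoordModel A b lam x j (x j))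
      = lam * ∑ j, |(x + d) j| - lam * ∑ j, |x j| + ∑ j, g j * d j := by
    simp only [lassoCoordModel, Pi.add_apply, mul_sum, ← sum_sub_distrib, ← sum_add_distrib]
    exact sum_congr rfl fun j _ => by ring
  rw [lassoObjective, lassoObjective, hsq, hcross, hlin]
  ring

theorem lassoObjective_add_single [DecidableEq κ] (A : Matrix ι κ ℝ) (b : ι → ℝ) (lam : ℝ)
    (x : κ → ℝ) (j : κ) (s : ℝ) :
    lassoObjective A b lam (x + Pi.single j s) = lassoObjective A b lam x
      + (lassoCoordModel A b lam x j (x j + s) - lassoCoordModel A b lam x j (x j))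
      + (1 / 2) * (∑ i, A i j ^ 2) * s ^ 2 := by
  rw [lassoObjective_add, sum_eq_single j (fun k _ hk => by simp [hk]) (by simp)]
  simp only [Pi.single_eq_same, mulVec_single, Pi.smul_apply, col_apply,
    MulOpposite.smul_eq_mul_unop, MulOpposite.unop_op, mul_pow, mul_comm, add_right_inj]
  rw [← mul_sum]
  ring

theorem lassoCoordModel_le_of_le_add_single [DecidableEq κ] {A : Matrix ι κ ℝ} {b : ι → ℝ}
    {lam : ℝ} (hlam : 0 ≤ lam) {x : κ → ℝ} {j : κ}
    (hmin : ∀ s, lassoObjective A b lam x ≤ lassoObjective A b lam (x + Pi.single j s)) (s : ℝ) :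
    lassoCoordModel A b lam x j (x j) ≤ lassoCoordModel A b lam x j (x j + s) := by
  refine (convexOn_lassoCoordModel A b hlam x j).le_add_of_le_add_mul_sq
    (c := (1 / 2) * ∑ i, A i j ^ 2) (fun s => ?_) s
  have := hmin s
  rw [lassoObjective_add_single] at this
  linarith

theorem lassoObjective_le_of_forall_lassoCoordModel_le (A : Matrix ι κ ℝ) (b : ι → ℝ)
    (lam : ℝ) (x : κ → ℝ)
    (hcoord : ∀ j s, lassoCoordModel A b lam x j (x j) ≤ lassoCoordModel A b lam x j (x j + s))
    (y : κ → ℝ) : lassoObjective A b lam x ≤ lassoObjective A b lam y := by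
  have hy : y = x + (y - x) := (add_sub_cancel x y).symm
  rw [hy, lassoObjective_add]
  have hlin := sum_nonneg fun j (_ : j ∈ univ) => sub_nonneg.2 (hcoord j ((y - x) j))
  have hquad : 0 ≤ (1 / 2 : ℝ) * ∑ i, (A *ᵥ (y - x)) i ^ 2 := by positivity
  linarith

theorem lassoObjective_le_of_restricted_min [DecidableEq κ] {A : Matrix ι κ ℝ} {b : ι → ℝ}
    {lam : ℝ} (hlam : 0 ≤ lam) {x : κ → ℝ} {I : Finset κ} (hsupp : ∀ j ∉ I, x j = 0)
    (hmin : ∀ y : κ → ℝ, (∀ j ∉ I, y j = 0) → lassoObjective A b lam x ≤ lassoObjective A b lam y)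
    (hgrad : ∀ j ∉ I, |(Aᵀ *ᵥ (A *ᵥ x - b)) j| ≤ lam) (y : κ → ℝ) :
    lassoObjective A b lam x ≤ lassoObjective A b lam y := by
  refine lassoObjective_le_of_forall_lassoCoordModel_le A b lam x (fun j s => ?_) y
  by_cases hj : j ∈ I
  · refine lassoCoordModel_le_of_le_add_single hlam (fun s => hmin _ fun k hk => ?_) s
    have hkj : k ≠ j := fun hkj => hk (hkj ▸ hj)
    simp [hsupp k hk, hkj]
  · have hgs : |(Aᵀ *ᵥ (A *ᵥ x - b)) j * s| ≤ lam * |s| := by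
      rw [abs_mul]
      exact mul_le_mul_of_nonneg_right (hgrad j hj) (abs_nonneg s)
    simp only [lassoCoordModel, hsupp j hj, abs_zero, mul_zero, zero_add, add_zero]
    linarith [neg_abs_le ((Aᵀ *ᵥ (A *ᵥ x - b)) j * s)]

end Lasso

theorem gmp_finite_termination_global_opt {n m : ℕ}
    (A : Matrix (Fin n) (Fin m) ℝ) (b : Fin n → ℝ) (lam : ℝ) (hlam : 0 < lam)
    (f : (Fin m → ℝ) → ℝ)
    (hf : ∀ x, f x = lam * (∑ j, |x j|) + (1/2) * ∑ i, (b i - A.mulVec x i)^2)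
    (I : ℕ → Finset (Fin m)) (x : ℕ → (Fin m → ℝ))
    (g : ℕ → (Fin m → ℝ))
    (hg : ∀ t, g t = A.transpose.mulVec (A.mulVec (x t) - b))
    (hsupp : ∀ t, ∀ j ∉ I t, x t j = 0)
    (hopt : ∀ t, ∀ y : Fin m → ℝ, (∀ j ∉ I t, y j = 0) → f (x t) ≤ f y)
    (hgrow : ∀ t, (∃ j ∉ I t, lam < |g t j|) → I t ⊂ I (t+1)) :
    ∃ t ≤ m, (∀ j ∉ I t, |g t j| ≤ lam) ∧ (∀ y : Fin m → ℝ, f (x t) ≤ f y) := by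
  obtain rfl : f = lassoObjective A b lam := funext hf
  obtain ⟨t, htm, hstop⟩ := exists_le_card_of_not_imp_ssubset I
    (fun t => ∀ j ∉ I t, |g t j| ≤ lam) fun t ht => hgrow t (by simpa using ht)
  refine ⟨t, by simpa using htm, hstop, ?_⟩
  rw [hg t] at hstop
  exact lassoObjective_le_of_restricted_min hlam.le (hsupp t) (hopt t) hstop
end

section
/- Near-orthogonality under RIP: if A has restricted isometry constant δ_{s+t} < 1 and u, v are vectors with disjoint supports, ‖u‖₀ ≤ s, ‖v‖₀ ≤ t, then |⟨Au, Av⟩| ≤ δ_{s+t}‖u‖‖v‖. -/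
open Finset

noncomputable def spars {m : ℕ} (x : Fin m → ℝ) : ℕ :=
  (Finset.univ.filter (fun i => x i ≠ 0)).card

theorem rip_near_orthogonality {n m : ℕ}
    (A : Matrix (Fin n) (Fin m) ℝ) (s t : ℕ)
    (δ : ℝ) (hδ0 : 0 ≤ δ) (hδ1 : δ < 1)
    (hRIP : ∀ x : Fin m → ℝ, spars x ≤ s + t →
      (1 - δ) * (∑ j, (x j)^2) ≤ ∑ i, (A.mulVec x i)^2 ∧
      (∑ i, (A.mulVec x i)^2) ≤ (1 + δ) * (∑ j, (x j)^2))
    (u v : Fin m → ℝ)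
    (hdisj : ∀ j, u j = 0 ∨ v j = 0)
    (hu : spars u ≤ s) (hv : spars v ≤ t) :
    |∑ i, A.mulVec u i * A.mulVec v i| ≤
      δ * Real.sqrt (∑ j, (u j)^2) * Real.sqrt (∑ j, (v j)^2) := by
  by_cases hU : ∑ j, (u j)^2 = 0
  · have hu0 : ∀ j, u j = 0 := by
      intro j
      have := (Finset.sum_eq_zero_iff_of_nonneg (fun j _ => sq_nonneg (u j))).1 hU j (mem_univ j)
      exact pow_eq_zero_iff (by norm_num) |>.1 this
    have h0 : ∀ i, A.mulVec u i = 0 := by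
      intro i; simp [Matrix.mulVec, dotProduct, hu0]
    simp only [h0, zero_mul, Finset.sum_const_zero, abs_zero]
    positivity
  by_cases hV : ∑ j, (v j)^2 = 0
  · have hv0 : ∀ j, v j = 0 := by
      intro j
      have := (Finset.sum_eq_zero_iff_of_nonneg (fun j _ => sq_nonneg (v j))).1 hV j (mem_univ j)
      exact pow_eq_zero_iff (by norm_num) |>.1 this
    have h0 : ∀ i, A.mulVec v i = 0 := by
      intro i; simp [Matrix.mulVec, dotProduct, hv0]
    simp only [h0, mul_zero, Finset.sum_const_zero, abs_zero]
    positivity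
  have hUpos : (0:ℝ) < ∑ j, (u j)^2 :=
    lt_of_le_of_ne (Finset.sum_nonneg fun j _ => sq_nonneg _) (Ne.symm hU)
  have hVpos : (0:ℝ) < ∑ j, (v j)^2 :=
    lt_of_le_of_ne (Finset.sum_nonneg fun j _ => sq_nonneg _) (Ne.symm hV)
  set U := Real.sqrt (∑ j, (u j)^2) with hUdef
  set V := Real.sqrt (∑ j, (v j)^2) with hVdef
  have hU0 : 0 < U := Real.sqrt_pos.2 hUpos
  have hV0 : 0 < V := Real.sqrt_pos.2 hVpos
  have hU2 : U^2 = ∑ j, (u j)^2 := Real.sq_sqrt hUpos.le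
  have hV2 : V^2 = ∑ j, (v j)^2 := Real.sq_sqrt hVpos.le
  -- sparsity of combinations
  have hspars : ∀ c d : ℝ, spars (fun j => c * u j + d * v j) ≤ s + t := by
    intro c d
    have hsub : (univ.filter (fun j => c * u j + d * v j ≠ 0)) ⊆
        (univ.filter (fun j => u j ≠ 0)) ∪ (univ.filter (fun j => v j ≠ 0)) := by
      intro j hj
      simp only [mem_filter, mem_univ, true_and, mem_union] at hj ⊢
      by_contra h
      push_neg at h
      simp [h.1, h.2] at hj
    calc spars (fun j => c * u j + d * v j)
        ≤ ((univ.filter (fun j => u j ≠ 0)) ∪ (univ.filter (fun j => v j ≠ 0))).card :=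
          Finset.card_le_card hsub
      _ ≤ spars u + spars v := Finset.card_union_le _ _
      _ ≤ s + t := Nat.add_le_add hu hv
  have hcross : ∑ j, u j * v j = 0 := by
    apply Finset.sum_eq_zero
    intro j _
    rcases hdisj j with h | h <;> simp [h]
  -- mulVec linearity
  have hmul : ∀ (c d : ℝ) (i : Fin n),
      A.mulVec (fun j => c * u j + d * v j) i = c * A.mulVec u i + d * A.mulVec v i := by
    intro c d i
    simp only [Matrix.mulVec, dotProduct]
    rw [Finset.mul_sum, Finset.mul_sum, ← Finset.sum_add_distrib]
    exact Finset.sum_congr rfl fun j _ => by ring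
  set P := ∑ i, (A.mulVec u i)^2 with hP
  set Q := ∑ i, (A.mulVec v i)^2 with hQ
  set R := ∑ i, A.mulVec u i * A.mulVec v i with hR
  have key : ∀ ε : ℝ, ε^2 = 1 →
      (1 - δ) * 2 ≤ U⁻¹^2 * P + V⁻¹^2 * Q + 2 * ε * U⁻¹ * V⁻¹ * R ∧
      U⁻¹^2 * P + V⁻¹^2 * Q + 2 * ε * U⁻¹ * V⁻¹ * R ≤ (1 + δ) * 2 := by
    intro ε hε
    obtain ⟨h1, h2⟩ := hRIP (fun j => U⁻¹ * u j + (ε * V⁻¹) * v j) (hspars _ _)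
    have hn : ∑ j, ((fun j => U⁻¹ * u j + (ε * V⁻¹) * v j) j)^2 = 2 := by
      have he : ∀ j, (U⁻¹ * u j + (ε * V⁻¹) * v j)^2 =
          U⁻¹^2 * (u j)^2 + ε^2 * V⁻¹^2 * (v j)^2 + (2 * ε * U⁻¹ * V⁻¹) * (u j * v j) := by
        intro j; ring
      rw [Finset.sum_congr rfl (fun j _ => he j), Finset.sum_add_distrib,
        Finset.sum_add_distrib, ← Finset.mul_sum, ← Finset.mul_sum, ← Finset.mul_sum,
        hcross, ← hU2, ← hV2, hε]
      field_simp
      ring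
    have hm : ∑ i, (A.mulVec (fun j => U⁻¹ * u j + (ε * V⁻¹) * v j) i)^2 =
        U⁻¹^2 * P + V⁻¹^2 * Q + 2 * ε * U⁻¹ * V⁻¹ * R := by
      rw [Finset.sum_congr rfl (fun i _ => by rw [hmul])]
      have he : ∀ i, (U⁻¹ * A.mulVec u i + (ε * V⁻¹) * A.mulVec v i)^2 =
          U⁻¹^2 * (A.mulVec u i)^2 + ε^2 * V⁻¹^2 * (A.mulVec v i)^2 +
            (2 * ε * U⁻¹ * V⁻¹) * (A.mulVec u i * A.mulVec v i) := by
        intro i; ring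
      rw [Finset.sum_congr rfl (fun i _ => he i), Finset.sum_add_distrib,
        Finset.sum_add_distrib, ← Finset.mul_sum, ← Finset.mul_sum, ← Finset.mul_sum,
        hε, hP, hQ, hR]
      ring
    rw [hn] at h1 h2
    rw [hm] at h1 h2
    exact ⟨h1, h2⟩
  obtain ⟨hp1, hp2⟩ := key 1 (by norm_num)
  obtain ⟨hm1, hm2⟩ := key (-1) (by norm_num)
  have hUV0 : (0:ℝ) ≤ U * V := (mul_pos hU0 hV0).le
  have hUV : U * V * (U⁻¹ * V⁻¹ * R) = R := by
    rw [show U * V * (U⁻¹ * V⁻¹ * R) = (U * U⁻¹) * ((V * V⁻¹) * R) by ring,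
      mul_inv_cancel₀ hU0.ne', mul_inv_cancel₀ hV0.ne', one_mul, one_mul]
  rw [abs_le]
  constructor
  · have h : -(U⁻¹ * V⁻¹ * R) ≤ δ := by linarith
    have h2 := mul_le_mul_of_nonneg_left h hUV0
    have h3 : U * V * δ = δ * U * V := by ring
    linarith
  · have h : U⁻¹ * V⁻¹ * R ≤ δ := by linarith
    have h2 := mul_le_mul_of_nonneg_left h hUV0
    have h3 : U * V * δ = δ * U * V := by ring
    linarith
end
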